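/- Let G be a finite subgroup of U(2), Z = G ∩ {scalar matrices}, and let H₁, …, H_r be a complete set of representatives for the G-conjugacy classes of maximal abelian subgroups of G. Then the class equation |G| = |Z| + Σ_{i=1}^{r} [G : N_G(H_i)]·(|H_i| − |Z|) holds. -/

import Mathlib

/-!
For `2 × 2` matrices the commutator `y * z - z * y` is read off from the cross product of the
vectors `(y₀₁, y₁₀, y₀₀ - y₁₁)` and `(z₀₁, z₁₀, z₀₀ - z₁₁)`. Two matrices commuting with a
non-scalar `x` have vectors proportional to the nonzero vector of `x`, hence commute: centralizers
of non-scalar elements of U(2) are abelian.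

So for `x ∈ G \ Z` the group `C_G(x)` is the unique maximal abelian subgroup of `G` containing `x`,
while every maximal abelian subgroup contains the central subgroup `Z`. Thus `G \ Z` is the
disjoint union of the sets `M \ Z` over the maximal abelian subgroups `M`, and grouping the `M`
into conjugacy classes, the class of `Hᵢ` having `[G : N_G(Hᵢ)]` members of order `|Hᵢ|`, gives
the formula.
-/

open Matrix

def MaxAbelianIn (H G : Subgroup (Matrix.unitaryGroup (Fin 2) ℂ)) : Prop :=
  H ≤ G ∧ IsMulCommutative H ∧
    ∀ H' : Subgroup (Matrix.unitaryGroup (Fin 2) ℂ),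
      H' ≤ G → IsMulCommutative H' → H ≤ H' → H' = H

/-- `ConjIn G H₁ H₂`: the subgroup `H₂` is conjugate to `H₁` by an element of `G`,
i.e. `H₂ = g H₁ g⁻¹` for some `g ∈ G`. -/
def ConjIn (G H₁ H₂ : Subgroup (Matrix.unitaryGroup (Fin 2) ℂ)) : Prop :=
  ∃ g ∈ G, ∀ x, x ∈ H₂ ↔ g⁻¹ * x * g ∈ H₁

open scoped Pointwise

namespace Matrix

variable {R : Type*} [CommRing R]

/-- The traceless part of `x`, with its diagonal coordinate doubled so that no division occurs. -/
def tracelessVec (x : Matrix (Fin 2) (Fin 2) R) : Fin 3 → R :=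
  ![x 0 1, x 1 0, x 0 0 - x 1 1]

lemma mul_sub_mul_eq_cross (y z : Matrix (Fin 2) (Fin 2) R) :
    y * z - z * y =
      let c := tracelessVec y ⨯₃ tracelessVec z
      !![c 2, c 1; c 0, -c 2] := by
  ext i j
  fin_cases i <;> fin_cases j <;>
    simp only [Fin.zero_eta, Fin.mk_one, Fin.isValue, sub_apply, mul_apply, Fin.sum_univ_two,
      tracelessVec, cross_apply, Nat.succ_eq_add_one, Nat.reduceAdd, cons_val_one, cons_val_zero,
      cons_val, neg_sub, of_apply, cons_val', cons_val_fin_one] <;>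
    ring

lemma commute_iff_cross_eq_zero (y z : Matrix (Fin 2) (Fin 2) R) :
    Commute y z ↔ tracelessVec y ⨯₃ tracelessVec z = 0 := by
  rw [commute_iff_eq, ← sub_eq_zero, mul_sub_mul_eq_cross]
  simp only [Fin.isValue, ← ext_iff, of_apply, cons_val', cons_val_fin_one, zero_apply,
    Fin.forall_fin_succ, cons_val_zero, cons_val_succ, forall_const, neg_eq_zero, funext_iff,
    Pi.zero_apply, Fin.succ_zero_eq_one, Fin.succ_one_eq_two, IsEmpty.forall_iff, and_true]
  tauto

lemma tracelessVec_eq_zero_iff (x : Matrix (Fin 2) (Fin 2) R) :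
    tracelessVec x = 0 ↔ ∃ c : R, x = c • 1 := by
  constructor
  · intro h
    have h0 := congrFun h 0
    have h1 := congrFun h 1
    have h2 := congrFun h 2
    simp only [tracelessVec, Fin.isValue, cons_val, Pi.zero_apply, sub_eq_zero] at h0 h1 h2
    exact ⟨x 0 0, by ext i j; fin_cases i <;> fin_cases j <;> simp [h0, h1, h2]⟩
  · rintro ⟨c, rfl⟩
    ext i
    fin_cases i <;> simp [tracelessVec]

lemma commute_of_commute_of_not_scalar {K : Type*} [Field K] {x y z : Matrix (Fin 2) (Fin 2) K}
    (hx : ¬ ∃ c : K, x = c • 1) (hy : Commute x y) (hz : Commute x z) : Commute y z := by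
  rw [commute_iff_cross_eq_zero] at hy hz ⊢
  have hv : tracelessVec x ≠ 0 := mt (tracelessVec_eq_zero_iff x).1 hx
  obtain ⟨t, ht⟩ : ∃ t : K, t • tracelessVec x = tracelessVec y := by
    by_contra! h
    exact crossProduct_ne_zero_iff_linearIndependent.2 ((LinearIndependent.pair_iff' hv).2 h) hy
  rw [← ht, map_smul, LinearMap.smul_apply, hz, smul_zero]

end Matrix

namespace MulAction

theorem sum_eq_sum_ncard_orbit_smul {G α β ι : Type*} [Group G] [MulAction G α]
    [AddCommMonoid β] [Fintype ι] {s : Finset α} {f : α → β} (hf : ∀ (g : G) a, f (g • a) = f a)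
    {x : ι → α} (hxs : ∀ i, orbit G (x i) ⊆ s) (hx : ∀ i j, x j ∈ orbit G (x i) → i = j)
    (hs : ∀ a ∈ s, ∃ i, a ∈ orbit G (x i)) :
    ∑ a ∈ s, f a = ∑ i, (orbit G (x i)).ncard • f (x i) := by
  classical
  have hsplit : ∀ a ∈ s, f a = ∑ i, if a ∈ orbit G (x i) then f (x i) else 0 := by
    intro a ha
    obtain ⟨i, hi⟩ := hs a ha
    rw [Finset.sum_eq_single i, if_pos hi]
    · obtain ⟨g, rfl⟩ := hi
      exact hf g (x i)
    · intro j _ hji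
      refine if_neg fun hj => hji (hx i j ?_).symm
      rw [← orbit_eq_iff, ← orbit_eq_iff.2 hi, orbit_eq_iff.2 hj]
    · simp
  rw [Finset.sum_congr rfl hsplit, Finset.sum_comm]
  refine Finset.sum_congr rfl fun i _ => ?_
  have horbit : (({a ∈ s | a ∈ orbit G (x i)} : Finset α) : Set α) = orbit G (x i) := by
    ext a
    simpa using fun ha => hxs i ha
  rw [← Finset.sum_filter, Finset.sum_const, ← Set.ncard_coe_finset, horbit]

end MulAction

namespace Subgroup

variable {U : Type*} [Group U]

lemma isMulCommutative_of_le {H K : Subgroup U} [IsMulCommutative K] (hHK : H ≤ K) :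
    IsMulCommutative H :=
  .of_setLike_mul_comm fun _ ha _ hb => setLike_mul_comm (hHK ha) (hHK hb)

def IsCommSubgroup (G K : Subgroup U) : Prop := K ≤ G ∧ IsMulCommutative K

variable {G M : Subgroup U} {Z : Set U} {x : U}

lemma le_centralizer_singleton_of_mem (hM : IsMulCommutative M) (hx : x ∈ M) :
    M ≤ centralizer {x} :=
  fun _ hy => mem_centralizer_singleton_iff.2 (setLike_mul_comm hy hx)

lemma maximal_centralizer_inf (hx : x ∈ G)
    (hC : IsMulCommutative (centralizer {x} ⊓ G : Subgroup U)) :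
    Maximal G.IsCommSubgroup (centralizer {x} ⊓ G) :=
  ⟨⟨inf_le_right, hC⟩, fun _ hK hle =>
    le_inf (le_centralizer_singleton_of_mem hK.2 (hle ⟨mem_centralizer_singleton_iff.2 rfl, hx⟩))
      hK.1⟩

lemma eq_centralizer_inf_of_maximal (hM : Maximal G.IsCommSubgroup M) (hx : x ∈ M)
    (hC : IsMulCommutative (centralizer {x} ⊓ G : Subgroup U)) :
    M = centralizer {x} ⊓ G :=
  hM.eq_of_le ⟨inf_le_right, hC⟩ (le_inf (le_centralizer_singleton_of_mem hM.prop.2 hx) hM.prop.1)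

lemma subset_of_maximal (hM : Maximal G.IsCommSubgroup M) (hZG : Z ⊆ G) (hZ : Z ⊆ center U) :
    Z ⊆ M := by
  have := hM.prop.2
  have hcomm : ∀ a ∈ (M : Set U) ∪ Z, ∀ b ∈ (M : Set U) ∪ Z, a * b = b * a := by
    rintro a (ha | ha) b (hb | hb)
    · exact setLike_mul_comm ha hb
    · exact mem_center_iff.1 (hZ hb) a
    · exact (mem_center_iff.1 (hZ ha) b).symm
    · exact mem_center_iff.1 (hZ hb) a
  have hM_eq : M = closure ((M : Set U) ∪ Z) := hM.eq_of_le
    ⟨(closure_le G).2 (Set.union_subset hM.prop.1 hZG), isMulCommutative_closure hcomm⟩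
    fun _ hx => subset_closure (Or.inl hx)
  rw [hM_eq]
  exact fun _ hz => subset_closure (Or.inr hz)

variable (G) in
lemma finite_setOf_maximal_isCommSubgroup [Finite G] :
    {M | Maximal G.IsCommSubgroup M}.Finite :=
  Set.Finite.of_finite_image ((Set.toFinite (G : Set U)).finite_subsets.subset
    (Set.image_subset_iff.2 fun _ hM => hM.prop.1)) SetLike.coe_injective.injOn

lemma mem_sdiff_iff_centralizer_inf_eq (hM : Maximal G.IsCommSubgroup M)
    (hCA : ∀ x ∈ G, x ∉ Z → IsMulCommutative (centralizer {x} ⊓ G : Subgroup U)) :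
    x ∈ (M : Set U) \ Z ↔ x ∈ (G : Set U) \ Z ∧ centralizer {x} ⊓ G = M := by
  constructor
  · rintro ⟨hxM, hxZ⟩
    exact ⟨⟨hM.prop.1 hxM, hxZ⟩, (eq_centralizer_inf_of_maximal hM hxM (hCA x (hM.prop.1 hxM) hxZ)).symm⟩
  · rintro ⟨⟨hxG, hxZ⟩, rfl⟩
    exact ⟨⟨mem_centralizer_singleton_iff.2 rfl, hxG⟩, hxZ⟩

theorem card_eq_card_add_sum_card_sub [Finite G] (hZG : Z ⊆ G) (hZ : Z ⊆ center U)
    (hCA : ∀ x ∈ G, x ∉ Z → IsMulCommutative (centralizer {x} ⊓ G : Subgroup U)) :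
    Nat.card G = Nat.card Z + ∑ M ∈ (finite_setOf_maximal_isCommSubgroup G).toFinset,
      (Nat.card M - Nat.card Z) := by
  classical
  have hGZ : ((G : Set U) \ Z).Finite := (Set.toFinite _).sdiff
  have hmaps : ∀ x ∈ hGZ.toFinset,
      centralizer {x} ⊓ G ∈ (finite_setOf_maximal_isCommSubgroup G).toFinset := by
    intro x hx
    rw [Set.Finite.mem_toFinset] at hx ⊢
    exact maximal_centralizer_inf hx.1 (hCA x hx.1 hx.2)
  calc Nat.card G = Nat.card Z + ((G : Set U) \ Z).ncard := by
        rw [Nat.card_coe_set_eq, add_comm, Set.ncard_sdiff_add_ncard_of_subset hZG]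
        exact Nat.card_coe_set_eq (G : Set U)
    _ = _ := by
        rw [Set.ncard_eq_toFinset_card _ hGZ, Finset.card_eq_sum_card_fiberwise hmaps]
        refine congrArg _ (Finset.sum_congr rfl fun M hM => ?_)
        rw [Set.Finite.mem_toFinset] at hM
        have hfiber : (({x ∈ hGZ.toFinset | centralizer {x} ⊓ G = M} : Finset U) : Set U) =
            (M : Set U) \ Z := by
          ext x
          simpa using (mem_sdiff_iff_centralizer_inf_eq hM hCA).symm
        rw [← Set.ncard_coe_finset, hfiber, Set.ncard_sdiff (subset_of_maximal hM hZG hZ)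
          ((Set.toFinite _).subset hZG), Nat.card_coe_set_eq, ← Nat.card_coe_set_eq (M : Set U)]
        rfl

abbrev conjMulAction : MulAction U (Subgroup U) := MulAction.compHom _ MulAut.conj

attribute [local instance] conjMulAction

lemma conj_smul_def (g : U) (H : Subgroup U) : g • H = MulAut.conj g • H := rfl

lemma mem_conj_smul_iff {g x : U} {H : Subgroup U} : x ∈ g • H ↔ g⁻¹ * x * g ∈ H := by
  rw [conj_smul_def, mem_pointwise_smul_iff_inv_smul_mem, MulAut.smul_def, MulAut.conj_inv_apply]

lemma conj_smul_eq_self_iff (g : U) (H : Subgroup U) :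
    g • H = H ↔ g ∈ normalizer (H : Set U) := by
  rw [mem_normalizer_iff'', SetLike.ext_iff]
  exact forall_congr' fun x => by rw [mem_conj_smul_iff]; exact iff_comm

lemma ncard_orbit_eq_relIndex (G H : Subgroup U) :
    (MulAction.orbit G H).ncard = (normalizer (H : Set U)).relIndex G := by
  rw [← MulAction.index_stabilizer, relIndex]
  congr 1
  ext g
  exact conj_smul_eq_self_iff (g : U) H

lemma card_conj_smul (g : U) (H : Subgroup U) : Nat.card ↥(g • H) = Nat.card H :=
  (Nat.card_congr (equivSMul (MulAut.conj g) H).toEquiv).symm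

lemma IsCommSubgroup.conj_smul {g : U} (hg : g ∈ G) {K : Subgroup U} (hK : G.IsCommSubgroup K) :
    G.IsCommSubgroup (g • K) :=
  have := hK.2
  ⟨conj_smul_le_of_le hK.1 ⟨g, hg⟩, map_isMulCommutative (H := K) _⟩

lemma maximal_conj_smul {g : U} (hg : g ∈ G) (hM : Maximal G.IsCommSubgroup M) :
    Maximal G.IsCommSubgroup (g • M) := by
  refine ⟨hM.prop.conj_smul hg, fun K hK hle => ?_⟩
  have hK' : g⁻¹ • K ≤ M := hM.2 (hK.conj_smul (inv_mem hg)) (by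
    rw [← inv_smul_smul g M]
    exact pointwise_smul_le_pointwise_smul_iff.2 hle)
  rw [← smul_inv_smul g K]
  exact pointwise_smul_le_pointwise_smul_iff.2 hK'

end Subgroup

section UnitaryGroup

open Subgroup

lemma mem_center_unitaryGroup_of_scalar {n K : Type*} [Fintype n] [DecidableEq n] [CommRing K]
    [StarRing K] {x : unitaryGroup n K} (hx : ∃ c : K, (x : Matrix n n K) = c • 1) :
    x ∈ center (unitaryGroup n K) := by
  obtain ⟨c, hc⟩ := hx
  exact mem_center_iff.2 fun g => Subtype.ext (by simp [hc])

lemma isMulCommutative_centralizer_of_not_scalar {K : Type*} [Field K] [StarRing K]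
    {x : unitaryGroup (Fin 2) K} (hx : ¬ ∃ c : K, (x : Matrix (Fin 2) (Fin 2) K) = c • 1) :
    IsMulCommutative (centralizer {x}) :=
  .of_setLike_mul_comm fun _ hy _ hz => Subtype.ext
    (commute_of_commute_of_not_scalar hx
      (congrArg Subtype.val (mem_centralizer_singleton_iff.1 hy)).symm
      (congrArg Subtype.val (mem_centralizer_singleton_iff.1 hz)).symm).eq

end UnitaryGroup

local notation "U2" => Matrix.unitaryGroup (Fin 2) ℂ

attribute [local instance] Subgroup.conjMulAction

lemma maxAbelianIn_iff (H G : Subgroup U2) : MaxAbelianIn H G ↔ Maximal G.IsCommSubgroup H :=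
  ⟨fun ⟨hHG, hH, hmax⟩ => ⟨⟨hHG, hH⟩, fun K hK hle => (hmax K hK.1 hK.2 hle).le⟩,
    fun h => ⟨h.prop.1, h.prop.2, fun _ hKG hK hle => (h.eq_of_le ⟨hKG, hK⟩ hle).symm⟩⟩

lemma conjIn_iff_mem_orbit (G H₁ H₂ : Subgroup U2) :
    ConjIn G H₁ H₂ ↔ H₂ ∈ MulAction.orbit G H₁ := by
  constructor
  · rintro ⟨g, hg, h⟩
    exact ⟨⟨g, hg⟩, SetLike.ext fun x => Subgroup.mem_conj_smul_iff.trans (h x).symm⟩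
  · rintro ⟨⟨g, hg⟩, rfl⟩
    exact ⟨g, hg, fun x => Subgroup.mem_conj_smul_iff⟩

open Subgroup in
/-- The class equation for a finite subgroup `G` of U(2): if `Z = G ∩ {scalars}` and
`H 0, …, H (r-1)` is a complete set of representatives of the `G`-conjugacy classes of
maximal abelian subgroups of `G`, then
`|G| = |Z| + Σᵢ [G : N_G(Hᵢ)]·(|Hᵢ| − |Z|)`. -/
theorem class_equation_U2
    (G : Subgroup (Matrix.unitaryGroup (Fin 2) ℂ)) (hG : Finite G)
    (Z : Set (Matrix.unitaryGroup (Fin 2) ℂ))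
    (hZ : Z = {g | g ∈ G ∧ ∃ c : ℂ,
      (g : Matrix (Fin 2) (Fin 2) ℂ) = c • (1 : Matrix (Fin 2) (Fin 2) ℂ)})
    (r : ℕ) (H : Fin r → Subgroup (Matrix.unitaryGroup (Fin 2) ℂ))
    (hmax : ∀ i, MaxAbelianIn (H i) G)
    (hdisj : ∀ i j, i ≠ j → ¬ ConjIn G (H i) (H j))
    (hcomplete : ∀ H' , MaxAbelianIn H' G → ∃ i, ConjIn G (H i) H') :
    Nat.card G =
      Nat.card Z +
        ∑ i : Fin r,
          ((Subgroup.normalizer ((H i : Set (Matrix.unitaryGroup (Fin 2) ℂ))) ⊓ G).relIndex G) * (Nat.card (H i) - Nat.card Z) := by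
  subst hZ
  have hCA (x : U2) (hxG : x ∈ G)
      (hxZ : x ∉ {g | g ∈ G ∧ ∃ c : ℂ, (g : Matrix (Fin 2) (Fin 2) ℂ) = c • 1}) :
      IsMulCommutative (centralizer {x} ⊓ G : Subgroup U2) :=
    have := isMulCommutative_centralizer_of_not_scalar fun hx => hxZ ⟨hxG, hx⟩
    isMulCommutative_of_le inf_le_left
  rw [card_eq_card_add_sum_card_sub (fun _ hg => hg.1)
      (fun _ hg => mem_center_unitaryGroup_of_scalar hg.2) hCA,
    MulAction.sum_eq_sum_ncard_orbit_smul (G := G) (x := H)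
      (fun g M => by rw [Subgroup.smul_def, card_conj_smul])
      (fun i M ⟨g, hg⟩ => by
        rw [Set.Finite.coe_toFinset, ← hg]
        exact maximal_conj_smul g.2 ((maxAbelianIn_iff _ _).1 (hmax i)))
      (fun i j h => by_contra fun hij => hdisj i j hij ((conjIn_iff_mem_orbit _ _ _).2 h))
      (fun M hM => (hcomplete M ((maxAbelianIn_iff _ _).2 (by simpa using hM))).imp
        fun i => (conjIn_iff_mem_orbit _ _ _).1)]
  simp only [ncard_orbit_eq_relIndex, inf_relIndex_right, smul_eq_mul]
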